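/- arXiv:1301.3001 — 2 statements merged into one kernel-verified Lean document; each statement's English description precedes it below -/
import Mathlib

section
/- Let G be a group with no 2-torsion, Z its center, and x ∈ G with x² ∈ Z. If for some g ∈ G the commutator [x,g] commutes with x, then x commutes with g. -/
open scoped commutatorElement

section

variable {G : Type*} [Group G]

theorem commutatorElement_sq_left (x g : G) : ⁅x ^ 2, g⁆ = x * ⁅x, g⁆ * x⁻¹ * ⁅x, g⁆ := by
  simp only [commutatorElement_def, sq]
  group

theorem commutatorElement_sq_left_of_commute {x g : G} (h : Commute ⁅x, g⁆ x) :
    ⁅x ^ 2, g⁆ = ⁅x, g⁆ ^ 2 := by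
  rw [commutatorElement_sq_left, h.symm.eq, mul_inv_cancel_right, sq]

theorem commutatorElement_eq_one_of_mem_center {z : G} (hz : z ∈ Subgroup.center G) (g : G) :
    ⁅z, g⁆ = 1 :=
  commutatorElement_eq_one_iff_commute.mpr (Subgroup.mem_center_iff.mp hz g).symm

end

theorem stmt_12 {G : Type*} [Group G]
    (htor : ∀ y : G, y ^ 2 = 1 → y = 1)
    (x : G) (hx : x ^ 2 ∈ Subgroup.center G) (g : G)
    (hcomm : ⁅x, g⁆ * x = x * ⁅x, g⁆) :
    x * g = g * x := by
  have hsq : ⁅x, g⁆ ^ 2 = 1 := by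
    rw [← commutatorElement_sq_left_of_commute hcomm]
    exact commutatorElement_eq_one_of_mem_center hx g
  exact commutatorElement_eq_one_iff_commute.mp (htor _ hsq)
end

section
/- Let G be a group, N₁ ⊇ N₂ ⊇ ⋯ normal subgroups of G with [Nᵢ,Nⱼ] ⊆ N_{i+j}. Fix k, and suppose x ∈ N₂ satisfies: (a) x² ∈ Z·N_p for some p < k, where Z is the center of G; (b) [x, y] ∈ N_m for all y ∈ N_l, where l < m < k; (c) [x, y] ∈ N_k for all y ∈ N_m; (d) [u, v] ∈ N_k for all u ∈ N_l, v ∈ N_p; (e) G/N_k has no 2-torsion. Then [x, y] ∈ N_k for all y ∈ N_l. -/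
/-!
Since `[x, y]² = [x, [x, y]]⁻¹ [x², y]`, it suffices that both factors lie in `N k`: the first by
(b) and (c), the second because `x² = z h` with `z` central gives `[x², y] = [h, y]`, which is
handled by (d). The absence of 2-torsion modulo `N k` then yields `[x, y] ∈ N k`.
-/

open scoped commutatorElement

theorem commutatorElement_sq_eq_inv_mul {G : Type*} [Group G] (x y : G) :
    ⁅x, y⁆ ^ 2 = ⁅x, ⁅x, y⁆⁆⁻¹ * ⁅x ^ 2, y⁆ := by
  simp only [sq, commutatorElement_def]
  group

theorem commutatorElement_central_mul_left {G : Type*} [Group G] {z : G}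
    (hz : z ∈ Subgroup.center G) (h y : G) : ⁅z * h, y⁆ = ⁅h, y⁆ := by
  have hzy : ⁅z, y⁆ = 1 :=
    commutatorElement_eq_one_iff_mul_comm.mpr (Subgroup.mem_center_iff.mp hz y).symm
  rw [commutatorElement_mul_left_eq_conj_mul, hzy, mul_one,
    (Subgroup.mem_center_iff.mp hz _).symm, mul_inv_cancel_right]

theorem stmt_15_general {G : Type*} [Group G] (N : ℕ → Subgroup G)
    (k p l m : ℕ)
    (x : G)
    (ha : ∃ z ∈ Subgroup.center G, ∃ h ∈ N p, x ^ 2 = z * h)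
    (hb : ∀ y ∈ N l, ⁅x, y⁆ ∈ N m)
    (hc : ∀ y ∈ N m, ⁅x, y⁆ ∈ N k)
    (hd : ∀ u ∈ N l, ∀ v ∈ N p, ⁅u, v⁆ ∈ N k)
    (he : ∀ y : G, y ^ 2 ∈ N k → y ∈ N k) :
    ∀ y ∈ N l, ⁅x, y⁆ ∈ N k := by
  intro y hy
  obtain ⟨z, hz, h, hh, hx2⟩ := ha
  have hxxy : ⁅x, ⁅x, y⁆⁆ ∈ N k := hc _ (hb y hy)
  have hx2y : ⁅x ^ 2, y⁆ ∈ N k := by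
    rw [hx2, commutatorElement_central_mul_left hz, ← commutatorElement_inv]
    exact (N k).inv_mem (hd y hy h hh)
  apply he
  rw [commutatorElement_sq_eq_inv_mul]
  exact (N k).mul_mem ((N k).inv_mem hxxy) hx2y

theorem stmt_15 {G : Type*} [Group G] (N : ℕ → Subgroup G)
    (hnorm : ∀ i, (N i).Normal)
    (hdesc : ∀ i, N (i + 1) ≤ N i)
    (hcomm : ∀ i j, ⁅N i, N j⁆ ≤ N (i + j))
    (k p l m : ℕ) (hpk : p < k) (hlm : l < m) (hmk : m < k)
    (x : G) (hx : x ∈ N 2)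
    (ha : ∃ z ∈ Subgroup.center G, ∃ h ∈ N p, x ^ 2 = z * h)
    (hb : ∀ y ∈ N l, ⁅x, y⁆ ∈ N m)
    (hc : ∀ y ∈ N m, ⁅x, y⁆ ∈ N k)
    (hd : ∀ u ∈ N l, ∀ v ∈ N p, ⁅u, v⁆ ∈ N k)
    (he : ∀ y : G, y ^ 2 ∈ N k → y ∈ N k) :
    ∀ y ∈ N l, ⁅x, y⁆ ∈ N k :=
  stmt_15_general N k p l m x ha hb hc hd he
end
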